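/- Let h(z) = 2(1−z)^{−1/2} (principal branch) and let f = h + conj(g) be the sense-preserving harmonic mapping on 𝔻 with dilatation w(z) = z, so that J_f(z) = (1−|z|²)/|1−z|³. Then for every p > 1, sup_{a∈𝔻} ∫_𝔻 J_f(z) (1−|φ_a(z)|²)^p dA(z) ≤ 8 ∫_𝔻 (1−|ζ|²)^{p−2} dA(ζ) < ∞; in particular f ∈ 𝒬𝒯_p for all p > 1. -/

import Mathlib

open MeasureTheory Metric Complex Set Filter Topology

noncomputable section

/-- The open unit disk in the complex plane. -/
def unitDisk : Set ℂ := Metric.ball 0 1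

/-- The disk automorphism `φ_a(z) = (a - z)/(1 - conj a · z)`. -/
def moebius (a z : ℂ) : ℂ := (a - z) / (1 - (starRingEnd ℂ) a * z)

/-- The pre-Schwarzian derivative `h''/h'` of an analytic function. -/
def preSchwarz (h : ℂ → ℂ) (z : ℂ) : ℂ := deriv (deriv h) z / deriv h z

/-- The Schwarzian derivative `(h''/h')' - (1/2)(h''/h')²` of an analytic function. -/
def schwarz (h : ℂ → ℂ) (z : ℂ) : ℂ :=
  deriv (preSchwarz h) z - (1 / 2) * preSchwarz h z ^ 2

/-- The (second complex) dilatation `w = g'/h'` of the harmonic map `f = h + conj g`. -/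
def dil (h g : ℂ → ℂ) (z : ℂ) : ℂ := deriv g z / deriv h z

/-- `F_z = h''/h' - w'·conj(w)/(1-|w|²)` for `F = log J_f`, `f = h + conj g`. -/
def FzLogJac (h g : ℂ → ℂ) (z : ℂ) : ℂ :=
  preSchwarz h z -
    deriv (dil h g) z * (starRingEnd ℂ) (dil h g z) / ((1 - ‖dil h g z‖ ^ 2 : ℝ) : ℂ)

/-- The harmonic Schwarzian derivative
`S_f = S_h + (conj w/(1-|w|²))(w'·h''/h' - w'') - (3/2)(w'·conj w/(1-|w|²))²`. -/
def harmSchwarz (h g : ℂ → ℂ) (z : ℂ) : ℂ :=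
  schwarz h z
    + ((starRingEnd ℂ) (dil h g z) / ((1 - ‖dil h g z‖ ^ 2 : ℝ) : ℂ))
        * (deriv (dil h g) z * preSchwarz h z - deriv (deriv (dil h g)) z)
    - (3 / 2) * (deriv (dil h g) z * (starRingEnd ℂ) (dil h g z)
        / ((1 - ‖dil h g z‖ ^ 2 : ℝ) : ℂ)) ^ 2

/-- `f = h + conj g` is a sense-preserving harmonic mapping on the unit disk:
`h, g` analytic on `𝔻` and `J_f = |h'|² - |g'|² > 0` on `𝔻`. -/
def SensePreserving (h g : ℂ → ℂ) : Prop :=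
  DifferentiableOn ℂ h unitDisk ∧ DifferentiableOn ℂ g unitDisk ∧
    ∀ z ∈ unitDisk, ‖deriv g z‖ < ‖deriv h z‖

/-- `f` is uniformly locally univalent on the unit disk: injective on every
pseudo-hyperbolic disk of some fixed radius `r < 1`. -/
def UnifLocUnivalent (f : ℂ → ℂ) : Prop :=
  ∃ r : ℝ, 0 < r ∧ r < 1 ∧ ∀ a ∈ unitDisk,
    Set.InjOn f {z | z ∈ unitDisk ∧ ‖(z - a) / (1 - (starRingEnd ℂ) a * z)‖ < r}

/-- The Wirtinger derivative `F_z = (1/2)(∂ₓF - i ∂_yF)` of a real-differentiable map. -/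
def wirtZ (F : ℂ → ℂ) (z : ℂ) : ℂ :=
  (1 / 2) * (fderiv ℝ F z 1 - Complex.I * fderiv ℝ F z Complex.I)

/-- The Wirtinger derivative `F_{z̄} = (1/2)(∂ₓF + i ∂_yF)` of a real-differentiable map. -/
def wirtZbar (F : ℂ → ℂ) (z : ℂ) : ℂ :=
  (1 / 2) * (fderiv ℝ F z 1 + Complex.I * fderiv ℝ F z Complex.I)

/-- The Jacobian `J_F = |F_z|² - |F_{z̄}|²` of a smooth map `F : 𝔻 → ℂ`. -/
def jac (F : ℂ → ℂ) (z : ℂ) : ℝ := ‖wirtZ F z‖ ^ 2 - ‖wirtZbar F z‖ ^ 2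

/-- `σ` is a holomorphic automorphism of the unit disk. -/
def DiskAut (σ : ℂ → ℂ) : Prop :=
  DifferentiableOn ℂ σ unitDisk ∧ Set.BijOn σ unitDisk unitDisk

/-- The function `h(z) = 2(1-z)^{-1/2}` (principal branch). -/
def hfun (w : ℂ) : ℂ := 2 * (1 - w) ^ (-(1 / 2) : ℂ)

/-! Since `|g'| = |z| |h'|`, the Jacobian is `J_f = (1 - |z|²)/|1 - z|³ ≤ 8 (1 - |z|²)⁻²`, because
`1 - |z|² ≤ 2 |1 - z|`. The weight `(1 - |z|²)⁻² dA` is the hyperbolic area, which the involution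
`φ_a` preserves, so substituting `z = φ_a ζ` turns `(1 - |φ_a z|²)^p` into `(1 - |ζ|²)^p`.
The remaining radial integral `∫ r (1 - r²)^(p-2) dr` converges for `p > 1`. -/

open scoped ENNReal

lemma mem_unitDisk {z : ℂ} : z ∈ unitDisk ↔ ‖z‖ < 1 := by
  simp [unitDisk]

lemma one_sub_norm_sq_pos {z : ℂ} (hz : ‖z‖ < 1) : 0 < 1 - ‖z‖ ^ 2 := by
  nlinarith [norm_nonneg z]

lemma norm_one_sub_pos {z : ℂ} (hz : ‖z‖ < 1) : 0 < ‖1 - z‖ :=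
  norm_pos_iff.mpr (sub_ne_zero.mpr fun h => by simp [← h] at hz)

lemma one_sub_conj_mul_ne_zero {a z : ℂ} (ha : ‖a‖ < 1) (hz : ‖z‖ < 1) :
    1 - (starRingEnd ℂ) a * z ≠ 0 := by
  refine sub_ne_zero.mpr fun h => ?_
  have : ‖(starRingEnd ℂ) a * z‖ < 1 := by
    rw [norm_mul, RCLike.norm_conj]
    nlinarith [norm_nonneg a, norm_nonneg z]
  simp [← h] at this

lemma norm_sq_one_sub_conj_mul_sub_norm_sq_sub (a z : ℂ) :
    ‖1 - (starRingEnd ℂ) a * z‖ ^ 2 - ‖a - z‖ ^ 2 = (1 - ‖a‖ ^ 2) * (1 - ‖z‖ ^ 2) := by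
  simp only [← Complex.normSq_eq_norm_sq, Complex.normSq_apply, Complex.mul_re, Complex.mul_im,
    Complex.sub_re, Complex.sub_im, Complex.one_re, Complex.one_im, Complex.conj_re,
    Complex.conj_im]
  ring

lemma one_sub_norm_moebius_sq {a z : ℂ} (ha : ‖a‖ < 1) (hz : ‖z‖ < 1) :
    1 - ‖moebius a z‖ ^ 2
      = (1 - ‖a‖ ^ 2) * (1 - ‖z‖ ^ 2) / ‖1 - (starRingEnd ℂ) a * z‖ ^ 2 := by
  have hd : ‖1 - (starRingEnd ℂ) a * z‖ ^ 2 ≠ 0 := by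
    simpa using one_sub_conj_mul_ne_zero ha hz
  rw [moebius, norm_div, div_pow, eq_div_iff hd, sub_mul, div_mul_cancel₀ _ hd, one_mul,
    norm_sq_one_sub_conj_mul_sub_norm_sq_sub]

lemma norm_moebius_lt_one {a z : ℂ} (ha : ‖a‖ < 1) (hz : ‖z‖ < 1) : ‖moebius a z‖ < 1 := by
  have hpos : 0 < 1 - ‖moebius a z‖ ^ 2 := by
    rw [one_sub_norm_moebius_sq ha hz]
    have := one_sub_conj_mul_ne_zero ha hz
    have := one_sub_norm_sq_pos ha
    have := one_sub_norm_sq_pos hz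
    positivity
  nlinarith [norm_nonneg (moebius a z)]

lemma moebius_moebius {a z : ℂ} (ha : ‖a‖ < 1) (hz : ‖z‖ < 1) :
    moebius a (moebius a z) = z := by
  have hd := one_sub_conj_mul_ne_zero ha hz
  have haa := one_sub_conj_mul_ne_zero ha ha
  set c := (starRingEnd ℂ) a
  have hnum : a - (a - z) / (1 - c * z) = z * (1 - c * a) / (1 - c * z) := by
    rw [eq_div_iff hd, sub_mul, div_mul_cancel₀ _ hd]; ring
  have hden : 1 - c * ((a - z) / (1 - c * z)) = (1 - c * a) / (1 - c * z) := by
    rw [eq_div_iff hd, sub_mul, mul_assoc, div_mul_cancel₀ _ hd]; ring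
  rw [moebius, moebius, hnum, hden, div_div_div_cancel_right₀ hd, mul_div_assoc, div_self haa,
    mul_one]

lemma image_moebius_unitDisk {a : ℂ} (ha : ‖a‖ < 1) : moebius a '' unitDisk = unitDisk := by
  refine Subset.antisymm ?_ fun z hz => ?_
  · rintro _ ⟨z, hz, rfl⟩
    exact mem_unitDisk.mpr (norm_moebius_lt_one ha (mem_unitDisk.mp hz))
  · rw [mem_unitDisk] at hz
    exact ⟨moebius a z, mem_unitDisk.mpr (norm_moebius_lt_one ha hz), moebius_moebius ha hz⟩

lemma injOn_moebius_unitDisk {a : ℂ} (ha : ‖a‖ < 1) : InjOn (moebius a) unitDisk := by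
  intro x hx y hy h
  rw [← moebius_moebius ha (mem_unitDisk.mp hx), h, moebius_moebius ha (mem_unitDisk.mp hy)]

lemma hasDerivAt_moebius {a z : ℂ} (ha : ‖a‖ < 1) (hz : ‖z‖ < 1) :
    HasDerivAt (moebius a) ((‖a‖ ^ 2 - 1 : ℂ) / (1 - (starRingEnd ℂ) a * z) ^ 2) z := by
  have hnum : HasDerivAt (fun w : ℂ => a - w) (-1) z := by
    simpa using (hasDerivAt_id z).const_sub a
  have hden : HasDerivAt (fun w : ℂ => 1 - (starRingEnd ℂ) a * w) (-(starRingEnd ℂ) a) z := by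
    simpa using ((hasDerivAt_id z).const_mul ((starRingEnd ℂ) a)).const_sub 1
  refine (hnum.div hden (one_sub_conj_mul_ne_zero ha hz)).congr_deriv ?_
  have haa : (starRingEnd ℂ) a * a = ‖a‖ ^ 2 := by
    rw [mul_comm, Complex.mul_conj, Complex.normSq_eq_norm_sq]; push_cast; ring
  linear_combination (1 / (1 - (starRingEnd ℂ) a * z) ^ 2) * haa

/-- Schwarz–Pick with equality: disk automorphisms are hyperbolic isometries. -/
lemma norm_deriv_moebius_mul {a z : ℂ} (ha : ‖a‖ < 1) (hz : ‖z‖ < 1) :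
    ‖deriv (moebius a) z‖ * (1 - ‖z‖ ^ 2) = 1 - ‖moebius a z‖ ^ 2 := by
  rw [(hasDerivAt_moebius ha hz).deriv, one_sub_norm_moebius_sq ha hz, norm_div, norm_pow]
  have : ‖(‖a‖ ^ 2 - 1 : ℂ)‖ = 1 - ‖a‖ ^ 2 := by
    rw [← Complex.ofReal_pow, ← Complex.ofReal_one, ← Complex.ofReal_sub, Complex.norm_real,
      Real.norm_eq_abs, abs_sub_comm, abs_of_pos (one_sub_norm_sq_pos ha)]
  rw [this]
  ring

lemma det_restrictScalars_toSpanSingleton (d : ℂ) :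
    ((ContinuousLinearMap.toSpanSingleton ℂ d).restrictScalars ℝ).det = ‖d‖ ^ 2 := by
  have hsmul : ((ContinuousLinearMap.toSpanSingleton ℂ d : ℂ →L[ℂ] ℂ) : ℂ →ₗ[ℂ] ℂ)
      = d • LinearMap.id := by
    ext; simp
  rw [ContinuousLinearMap.det, ContinuousLinearMap.coe_restrictScalars,
    LinearMap.det_restrictScalars, hsmul, LinearMap.det_smul, LinearMap.det_id, mul_one,
    Module.finrank_self, pow_one, Algebra.norm_complex_apply, Complex.normSq_eq_norm_sq]

/-- The real Jacobian of a holomorphic map is `‖f'‖²`. -/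
lemma lintegral_image_eq_lintegral_norm_deriv_sq_mul {s : Set ℂ} (hs : MeasurableSet s)
    {f f' : ℂ → ℂ} (hf : ∀ z ∈ s, HasDerivWithinAt f (f' z) s z) (hinj : InjOn f s)
    (g : ℂ → ℝ≥0∞) :
    ∫⁻ z in f '' s, g z = ∫⁻ z in s, ENNReal.ofReal (‖f' z‖ ^ 2) * g (f z) := by
  rw [lintegral_image_eq_lintegral_abs_det_fderiv_mul volume hs
    (fun z hz => ((hf z hz).hasFDerivWithinAt.restrictScalars ℝ)) hinj g]
  simp_rw [det_restrictScalars_toSpanSingleton, abs_sq]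

lemma lintegral_hyperbolic_comp_moebius {a : ℂ} (ha : ‖a‖ < 1) (G : ℂ → ℝ≥0∞) :
    ∫⁻ z in unitDisk, ENNReal.ofReal ((1 - ‖z‖ ^ 2) ^ 2)⁻¹ * G (moebius a z)
      = ∫⁻ z in unitDisk, ENNReal.ofReal ((1 - ‖z‖ ^ 2) ^ 2)⁻¹ * G z := by
  have hs : MeasurableSet unitDisk := measurableSet_ball
  conv_lhs => rw [← image_moebius_unitDisk ha]
  have hderiv z (hz : z ∈ unitDisk) :
      HasDerivWithinAt (moebius a) (deriv (moebius a) z) unitDisk z :=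
    (hasDerivAt_moebius ha (mem_unitDisk.mp hz)).differentiableAt.hasDerivAt.hasDerivWithinAt
  rw [lintegral_image_eq_lintegral_norm_deriv_sq_mul hs hderiv (injOn_moebius_unitDisk ha)]
  refine setLIntegral_congr_fun hs fun z hz => ?_
  have hz1 := mem_unitDisk.mp hz
  have hpick := norm_deriv_moebius_mul ha hz1
  have hpos := one_sub_norm_sq_pos hz1
  have hderiv_pos : 0 < ‖deriv (moebius a) z‖ := by
    have := one_sub_norm_sq_pos (norm_moebius_lt_one ha hz1)
    rw [← hpick] at this
    exact pos_of_mul_pos_left this hpos.le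
  rw [moebius_moebius ha hz1, ← mul_assoc, ← ENNReal.ofReal_mul (sq_nonneg _), ← hpick]
  congr 3
  field_simp

lemma lintegral_hyperbolic_mul_one_sub_norm_moebius_sq_rpow {a : ℂ} (ha : ‖a‖ < 1) (p : ℝ) :
    ∫⁻ z in unitDisk, ENNReal.ofReal (((1 - ‖z‖ ^ 2) ^ 2)⁻¹ * (1 - ‖moebius a z‖ ^ 2) ^ p)
      = ∫⁻ z in unitDisk, ENNReal.ofReal ((1 - ‖z‖ ^ 2) ^ (p - 2)) := by
  have hs : MeasurableSet unitDisk := measurableSet_ball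
  simp_rw [ENNReal.ofReal_mul (inv_nonneg.mpr (sq_nonneg _))]
  rw [lintegral_hyperbolic_comp_moebius ha fun w => ENNReal.ofReal ((1 - ‖w‖ ^ 2) ^ p)]
  refine setLIntegral_congr_fun hs fun z hz => ?_
  have hpos := one_sub_norm_sq_pos (mem_unitDisk.mp hz)
  rw [← ENNReal.ofReal_mul (inv_nonneg.mpr (sq_nonneg _)), Real.rpow_sub hpos, Real.rpow_two,
    div_eq_inv_mul]

lemma integrableOn_mul_one_sub_sq_rpow {q : ℝ} (hq : -1 < q) :
    IntegrableOn (fun y : ℝ => y * (1 - y ^ 2) ^ q) (Ioc 0 1) := by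
  have hq1 : 0 < q + 1 := by linarith
  -- `y (1 - y²)^q` is the derivative of `-(1 - y²)^(q+1) / (2(q+1))`, continuous up to `y = 1`
  refine intervalIntegral.integrableOn_deriv_of_nonneg
    (g := fun y => -(1 - y ^ 2) ^ (q + 1) / (2 * (q + 1))) ?_ (fun y hy => ?_) (fun y hy => ?_)
  · exact ((continuousOn_const.sub (continuousOn_id.pow 2)).rpow_const
      fun _ _ => Or.inr hq1.le).neg.div_const _
  · have hy2 : 0 < 1 - y ^ 2 := by nlinarith [hy.1, hy.2]
    have hbase : HasDerivAt (fun y : ℝ => 1 - y ^ 2) (-(2 * y)) y := by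
      simpa using (hasDerivAt_pow 2 y).const_sub 1
    refine ((hbase.rpow_const (p := q + 1) (Or.inl hy2.ne')).neg.div_const
      (2 * (q + 1))).congr_deriv ?_
    rw [add_sub_cancel_right]
    field_simp
  · have hy2 : 0 < 1 - y ^ 2 := by nlinarith [hy.1, hy.2]
    exact mul_nonneg hy.1.le (Real.rpow_nonneg hy2.le q)

lemma lintegral_unitDisk_one_sub_norm_sq_rpow_lt_top {q : ℝ} (hq : -1 < q) :
    ∫⁻ z in unitDisk, ENNReal.ofReal ((1 - ‖z‖ ^ 2) ^ q) < ⊤ := by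
  have hradial := integrableOn_fun_norm_addHaar volume (E := ℂ)
    (f := fun y : ℝ => (1 - y ^ 2) ^ q) (r := 1)
  simp only [Complex.finrank_real_complex, Nat.add_one_sub_one, pow_one, smul_eq_mul] at hradial
  exact (hradial.mpr ((integrableOn_mul_one_sub_sq_rpow hq).mono_set Ioo_subset_Ioc_self)
    ).lintegral_lt_top

lemma hasDerivAt_hfun {z : ℂ} (hz : ‖z‖ < 1) :
    HasDerivAt hfun ((1 - z) ^ (-(3 / 2) : ℂ)) z := by
  have hre : 0 < (1 - z).re := by
    have := (abs_le.mp (Complex.abs_re_le_norm z)).2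
    simp only [Complex.sub_re, Complex.one_re]
    linarith
  have hbase : HasDerivAt (fun w : ℂ => 1 - w) (-1) z := by
    simpa using (hasDerivAt_id z).const_sub 1
  refine ((hbase.cpow_const (c := -(1 / 2)) (Or.inl hre)).const_mul 2).congr_deriv ?_
  norm_num
  ring

lemma norm_deriv_hfun_sq {z : ℂ} (hz : ‖z‖ < 1) :
    ‖deriv hfun z‖ ^ 2 = (‖1 - z‖ ^ 3)⁻¹ := by
  have hpos := norm_one_sub_pos hz
  rw [(hasDerivAt_hfun hz).deriv, show (-(3 / 2) : ℂ) = ((-(3 / 2) : ℝ) : ℂ) by norm_num,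
    Complex.norm_cpow_real, ← Real.rpow_natCast, ← Real.rpow_mul hpos.le,
    ← Real.rpow_natCast, ← Real.rpow_neg hpos.le]
  norm_num

lemma one_sub_norm_sq_le_two_mul_norm_one_sub {z : ℂ} (hz : ‖z‖ ≤ 1) :
    1 - ‖z‖ ^ 2 ≤ 2 * ‖1 - z‖ := by
  have : 1 - ‖z‖ ≤ ‖1 - z‖ := by simpa using norm_sub_norm_le (1 : ℂ) z
  nlinarith [norm_nonneg z]

lemma jacobian_hfun_shear_le {z : ℂ} (hz : ‖z‖ < 1) :
    ‖deriv hfun z‖ ^ 2 - ‖z * deriv hfun z‖ ^ 2 ≤ 8 * ((1 - ‖z‖ ^ 2) ^ 2)⁻¹ := by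
  have hB := one_sub_norm_sq_pos hz
  have hcube : (1 - ‖z‖ ^ 2) ^ 3 ≤ 8 * ‖1 - z‖ ^ 3 := by
    have := pow_le_pow_left₀ hB.le (one_sub_norm_sq_le_two_mul_norm_one_sub hz.le) 3
    linarith [mul_pow (2 : ℝ) ‖1 - z‖ 3]
  have hpos := norm_one_sub_pos hz
  calc ‖deriv hfun z‖ ^ 2 - ‖z * deriv hfun z‖ ^ 2 = (1 - ‖z‖ ^ 2) / ‖1 - z‖ ^ 3 := by
        rw [norm_mul, mul_pow, norm_deriv_hfun_sq hz]; ring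
    _ ≤ 8 * ((1 - ‖z‖ ^ 2) ^ 2)⁻¹ := by
        rw [← div_eq_mul_inv, div_le_div_iff₀ (by positivity) (by positivity)]
        nlinarith

theorem shear_example_QpType_general
    (g : ℂ → ℂ)
    (hgd : ∀ z ∈ unitDisk, deriv g z = z * deriv hfun z)
    (p : ℝ) (hp : 1 < p) :
    (∀ a ∈ unitDisk,
      ∫⁻ z in unitDisk, ENNReal.ofReal
          ((‖deriv hfun z‖ ^ 2 - ‖deriv g z‖ ^ 2) * (1 - ‖moebius a z‖ ^ 2) ^ p)
        ≤ 8 * ∫⁻ ζ in unitDisk, ENNReal.ofReal ((1 - ‖ζ‖ ^ 2) ^ (p - 2)))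
    ∧ (∫⁻ ζ in unitDisk, ENNReal.ofReal ((1 - ‖ζ‖ ^ 2) ^ (p - 2))) < ⊤ := by
  refine ⟨fun a ha => ?_, lintegral_unitDisk_one_sub_norm_sq_rpow_lt_top (by linarith)⟩
  have ha1 := mem_unitDisk.mp ha
  rw [← lintegral_hyperbolic_mul_one_sub_norm_moebius_sq_rpow ha1, ← lintegral_const_mul' _ _
    ENNReal.ofNat_ne_top]
  refine setLIntegral_mono' measurableSet_ball fun z hz => ?_
  have hz1 := mem_unitDisk.mp hz
  have hweight : 0 ≤ (1 - ‖moebius a z‖ ^ 2) ^ p :=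
    Real.rpow_nonneg (one_sub_norm_sq_pos (norm_moebius_lt_one ha1 hz1)).le p
  rw [hgd z hz, ← ENNReal.ofReal_ofNat, ← ENNReal.ofReal_mul (by norm_num), ← mul_assoc]
  exact ENNReal.ofReal_le_ofReal
    (mul_le_mul_of_nonneg_right (jacobian_hfun_shear_le hz1) hweight)

/-- For `h(z) = 2(1-z)^{-1/2}` and `f = h + conj g` with dilatation
`w(z) = z`, for every `p > 1`,
`sup_a ∫_𝔻 J_f (1-|φ_a|²)^p dA ≤ 8∫_𝔻 (1-|ζ|²)^{p-2} dA < ∞`; in particular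
`f ∈ 𝒬𝒯_p` for all `p > 1`. -/
theorem shear_example_QpType
    (g : ℂ → ℂ) (hg : DifferentiableOn ℂ g unitDisk)
    (hgd : ∀ z ∈ unitDisk, deriv g z = z * deriv hfun z)
    (p : ℝ) (hp : 1 < p) :
    (∀ a ∈ unitDisk,
      ∫⁻ z in unitDisk, ENNReal.ofReal
          ((‖deriv hfun z‖ ^ 2 - ‖deriv g z‖ ^ 2) * (1 - ‖moebius a z‖ ^ 2) ^ p)
        ≤ 8 * ∫⁻ ζ in unitDisk, ENNReal.ofReal ((1 - ‖ζ‖ ^ 2) ^ (p - 2)))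
    ∧ (∫⁻ ζ in unitDisk, ENNReal.ofReal ((1 - ‖ζ‖ ^ 2) ^ (p - 2))) < ⊤ :=
  shear_example_QpType_general g hgd p hp
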